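/- arXiv:2505.14800 — 3 statements merged into one kernel-verified Lean document; each statement's English description precedes it below -/
import Mathlib

section
/- If (E, 𝓛₁) and (E, 𝓛₂) are simple complexes of oriented matroids (COMs) on the same finite ground set E that have the same tope set (i.e., the covectors of 𝓛₁ with no zero entries are exactly the covectors of 𝓛₂ with no zero entries), then 𝓛₁ = 𝓛₂. In other words, a simple COM is uniquely determined by its set of topes. -/
open Finset

variable {E : Type*} [Fintype E] [DecidableEq E]

/-- The separator of two sign vectors: `S(X,Y) = {e : X_e = -Y_e ≠ 0}`. -/
def separator (X Y : E → SignType) : Finset E :=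
  Finset.univ.filter (fun e => X e = -Y e ∧ X e ≠ 0)

/-- The composition of two sign vectors: `(X∘Y)_e = X_e` if `X_e ≠ 0`, else `Y_e`. -/
def sComp (X Y : E → SignType) : E → SignType :=
  fun e => if X e ≠ 0 then X e else Y e

/-- A set of sign vectors is a COM if it satisfies face symmetry (FS) and
strong elimination (SE). -/
def IsCOM (L : Finset (E → SignType)) : Prop :=
  (∀ X ∈ L, ∀ Y ∈ L, sComp X (-Y) ∈ L) ∧
  (∀ X ∈ L, ∀ Y ∈ L, ∀ e ∈ separator X Y,
    ∃ Z ∈ L, Z e = 0 ∧ ∀ f ∉ separator X Y, Z f = sComp X Y f)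

/-- A COM is simple if every sign appears in every coordinate and every pair of
signs appears in every pair of distinct coordinates. -/
def IsSimpleCOM (L : Finset (E → SignType)) : Prop :=
  (∀ e : E, ∀ s : SignType, ∃ X ∈ L, X e = s) ∧
  (∀ e f : E, e ≠ f → ∀ s : SignType, ∃ X ∈ L, X e * X f = s)

/-- The topes of a COM: covectors with no zero entries. -/
def topes (L : Finset (E → SignType)) : Finset (E → SignType) :=
  L.filter (fun X => ∀ e, X e ≠ 0)

lemma separator_symm (X Y : E → SignType) : separator X Y = separator Y X := by
  ext e
  simp only [separator, mem_filter, mem_univ, true_and]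
  have : ∀ a b : SignType, (a = -b ∧ a ≠ 0) ↔ (b = -a ∧ b ≠ 0) := by decide
  exact this (X e) (Y e)

/-- The tope graph of a COM: vertices are topes, with an edge when the separator
has exactly one element. -/
def topeGraph (L : Finset (E → SignType)) :
    SimpleGraph {X // X ∈ topes L} where
  Adj P Q := (separator P.1 Q.1).card = 1
  symm := by constructor; intro P Q h; rwa [separator_symm]
  loopless := by
    constructor
    intro P h
    have : separator P.1 P.1 = ∅ := by
      ext e
      simp only [separator, mem_filter, mem_univ, true_and, Finset.notMem_empty,
        iff_false]
      have : ∀ a : SignType, ¬(a = -a ∧ a ≠ 0) := by decide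
      exact this (P.1 e)
    rw [this] at h
    simp at h

/-!
Induct on the number of zeros of a sign vector `X ∈ 𝓛₁`, assuming `𝓛₁` and `𝓛₂` agree on
vectors with fewer zeros. By simplicity and composition `X` lies below a tope, which is also a
tope of `𝓛₂`, so some `Z ∈ 𝓛₂` lies above `X`; take one with as many zeros as possible. If
`Z ≠ X`, then `Z` has fewer zeros than `X`, hence `Z ∈ 𝓛₁`, so its reflection `W = X ∘ (-Z)`
lies in `𝓛₁`, and `W`, having the zeros of `Z`, lies in `𝓛₂`. Strong elimination of `Z` and
`W` in `𝓛₂` at a coordinate where `Z` is nonzero and `X` is zero produces a vector of `𝓛₂`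
above `X` with more zeros than `Z`, a contradiction.
-/

def zeroSet (X : E → SignType) : Finset E :=
  univ.filter (X · = 0)

/-- The conformal order `X ≤ Y` of oriented matroid theory. -/
def IsFaceOf (X Y : E → SignType) : Prop :=
  ∀ e, X e ≠ 0 → Y e = X e

section

omit [Fintype E] [DecidableEq E]

variable {L L' : Finset (E → SignType)} {X Y Z : E → SignType}

theorem IsFaceOf.trans (hXY : IsFaceOf X Y) (hYZ : IsFaceOf Y Z) : IsFaceOf X Z := by
  intro e he
  rw [hYZ e (by rwa [hXY e he]), hXY e he]

theorem isFaceOf_sComp (X Y : E → SignType) : IsFaceOf X (sComp X Y) := by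
  intro e he
  simp [sComp, he]

theorem IsFaceOf.exists_ne_zero_of_ne (hXY : IsFaceOf X Y) (hne : X ≠ Y) :
    ∃ e, X e = 0 ∧ Y e ≠ 0 := by
  by_contra! h
  refine hne (funext fun e => ?_)
  by_cases hXe : X e = 0
  · rw [hXe, h e hXe]
  · exact (hXY e hXe).symm

theorem IsFaceOf.sComp_sComp_neg (hXZ : IsFaceOf X Z) : sComp Z (sComp X (-Z)) = Z := by
  funext f
  by_cases hZf : Z f = 0
  · have hXf : X f = 0 := by
      by_contra hXf
      exact hXf (hXZ f hXf ▸ hZf)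
    simp [sComp, hZf, hXf]
  · simp [sComp, hZf]

theorem IsSimpleCOM.exists_ne_zero (hs : IsSimpleCOM L) (e : E) : ∃ W ∈ L, W e ≠ 0 := by
  obtain ⟨W, hW, hWe⟩ := hs.1 e 1
  exact ⟨W, hW, hWe ▸ one_ne_zero⟩

variable [Fintype E]

theorem IsFaceOf.zeroSet_subset (hXY : IsFaceOf X Y) : zeroSet Y ⊆ zeroSet X := by
  intro f hf
  simp only [zeroSet, mem_filter, mem_univ, true_and] at hf ⊢
  by_contra hXf
  exact hXf (hXY f hXf ▸ hf)

theorem IsFaceOf.zeroSet_ssubset (hXY : IsFaceOf X Y) {e : E} (hXe : X e = 0)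
    (hYe : Y e ≠ 0) : zeroSet Y ⊂ zeroSet X :=
  (ssubset_iff_of_subset hXY.zeroSet_subset).2 ⟨e, by simp [zeroSet, hXe], by simp [zeroSet, hYe]⟩

theorem IsFaceOf.zeroSet_sComp_neg (hXZ : IsFaceOf X Z) :
    zeroSet (sComp X (-Z)) = zeroSet Z := by
  ext f
  by_cases hXf : X f = 0 <;> simp [zeroSet, sComp, hXf, hXZ f]

theorem IsCOM.sComp_mem (h : IsCOM L) (hX : X ∈ L) (hY : Y ∈ L) : sComp X Y ∈ L := by
  have hsComp : sComp X (-sComp X (-Y)) = sComp X Y := by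
    funext e
    by_cases he : X e = 0 <;> simp [sComp, he]
  simpa only [hsComp] using h.1 X hX _ (h.1 X hX Y hY)

theorem IsCOM.exists_tope_isFaceOf (h : IsCOM L) (hL : ∀ e, ∃ W ∈ L, W e ≠ 0) (hX : X ∈ L) :
    ∃ T ∈ topes L, IsFaceOf X T := by
  classical
  obtain ⟨T, hT, hTmin⟩ := (L.filter (IsFaceOf X)).exists_min_image (fun Y => #(zeroSet Y))
    ⟨X, mem_filter.mpr ⟨hX, fun _ _ => rfl⟩⟩
  rw [mem_filter] at hT
  refine ⟨T, mem_filter.mpr ⟨hT.1, fun e hTe => ?_⟩, hT.2⟩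
  obtain ⟨W, hW, hWe⟩ := hL e
  have hTW : sComp T W ∈ L.filter (IsFaceOf X) :=
    mem_filter.mpr ⟨h.sComp_mem hT.1 hW, hT.2.trans (isFaceOf_sComp T W)⟩
  have hlt := card_lt_card <| (isFaceOf_sComp T W).zeroSet_ssubset hTe (by simpa [sComp, hTe])
  exact (hTmin _ hTW).not_gt hlt

theorem IsCOM.exists_isFaceOf_zeroSet_ssuperset (h : IsCOM L) (hZ : Z ∈ L)
    (hW : sComp X (-Z) ∈ L) (hXZ : IsFaceOf X Z) {e : E} (hXe : X e = 0) (hZe : Z e ≠ 0) :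
    ∃ Z' ∈ L, IsFaceOf X Z' ∧ zeroSet Z ⊂ zeroSet Z' := by
  have he : e ∈ separator Z (sComp X (-Z)) := by simp [separator, sComp, hXe, hZe]
  obtain ⟨Z', hZ', hZ'e, hZ'Z⟩ := h.2 Z hZ _ hW e he
  rw [hXZ.sComp_sComp_neg] at hZ'Z
  -- On `X`'s support `Z` and `X ∘ (-Z)` both agree with `X`, so they are not separated there.
  have hsep : ∀ f ∈ separator Z (sComp X (-Z)), X f = 0 ∧ Z f ≠ 0 := by
    intro f hf
    simp only [separator, mem_filter, mem_univ, true_and] at hf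
    refine ⟨by_contra fun hXf => ?_, hf.2⟩
    rw [show sComp X (-Z) f = X f by simp [sComp, hXf], hXZ f hXf] at hf
    exact (by decide : ∀ a : SignType, a ≠ 0 → a ≠ -a) _ hXf hf.1
  refine ⟨Z', hZ', fun f hXf => ?_, (ssubset_iff_of_subset fun f hf => ?_).2
    ⟨e, by simp [zeroSet, hZ'e], by simp [zeroSet, hZe]⟩⟩
  · rw [hZ'Z f fun hf => hXf (hsep f hf).1, hXZ f hXf]
  · simp only [zeroSet, mem_filter, mem_univ, true_and] at hf ⊢
    rw [hZ'Z f fun hf' => (hsep f hf').2 hf, hf]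

theorem mem_of_mem_of_topes_eq (h : IsCOM L) (hL : ∀ e, ∃ W ∈ L, W e ≠ 0) (h' : IsCOM L')
    (ht : topes L = topes L') (hX : X ∈ L)
    (hagree : ∀ Y, #(zeroSet Y) < #(zeroSet X) → (Y ∈ L ↔ Y ∈ L')) : X ∈ L' := by
  classical
  obtain ⟨T, hT, hXT⟩ := h.exists_tope_isFaceOf hL hX
  obtain ⟨Z, hZ, hZmax⟩ := (L'.filter (IsFaceOf X)).exists_max_image (fun Y => #(zeroSet Y))
    ⟨T, mem_filter.mpr ⟨(mem_filter.mp (ht ▸ hT)).1, hXT⟩⟩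
  rw [mem_filter] at hZ
  by_contra hXL'
  obtain ⟨e, hXe, hZe⟩ := hZ.2.exists_ne_zero_of_ne fun hXZ => hXL' (hXZ ▸ hZ.1)
  have hZX : #(zeroSet Z) < #(zeroSet X) := card_lt_card (hZ.2.zeroSet_ssubset hXe hZe)
  have hWL : sComp X (-Z) ∈ L := h.1 X hX Z ((hagree Z hZX).mpr hZ.1)
  have hWL' : sComp X (-Z) ∈ L' := (hagree _ (hZ.2.zeroSet_sComp_neg ▸ hZX)).mp hWL
  obtain ⟨Z', hZ', hXZ', hlt⟩ := h'.exists_isFaceOf_zeroSet_ssuperset hZ.1 hWL' hZ.2 hXe hZe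
  exact (hZmax Z' (mem_filter.mpr ⟨hZ', hXZ'⟩)).not_gt (card_lt_card hlt)

end

/-- a simple COM is uniquely determined by its set of topes: two simple
COMs on the same ground set with the same topes have the same covector sets. -/
theorem simple_COM_determined_by_topes (L₁ L₂ : Finset (E → SignType))
    (h₁ : IsCOM L₁) (h₁s : IsSimpleCOM L₁)
    (h₂ : IsCOM L₂) (h₂s : IsSimpleCOM L₂)
    (htopes : topes L₁ = topes L₂) : L₁ = L₂ := by
  ext X
  induction hn : #(zeroSet X) using Nat.strong_induction_on generalizing X with
  | _ n IH =>
    subst hn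
    have hagree (Y : E → SignType) (hY : #(zeroSet Y) < #(zeroSet X)) : Y ∈ L₁ ↔ Y ∈ L₂ :=
      IH _ hY Y rfl
    exact ⟨(mem_of_mem_of_topes_eq h₁ h₁s.exists_ne_zero h₂ htopes · hagree),
      (mem_of_mem_of_topes_eq h₂ h₂s.exists_ne_zero h₁ htopes.symm ·
        fun Y hY => (hagree Y hY).symm)⟩
end

section
/- Let V = (Fin 4 → Bool) \ {𝟙, 𝟘, e₁}, the vertex set of the forbidden pc-minor Q₄^{--}(1), and let M be the Varchenko matrix of V over ℤ[X₁, X₂, X₃, X₄]. Then det M = (1 − X₁²)⁶ (1 − X₂²)⁵ (1 − X₃²)⁵ (1 − X₄²)⁵ · (1 − X₂²X₃²X₄²). In particular, this non-COM partial cube has a Varchenko determinant in which every factor has the well-structured form 1 − (∏_{i ∈ I} X_i)². -/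
open Finset MvPolynomial

/-- The Varchenko matrix of a finite set of vertices of the hypercube `Fin n → Bool`:
the entry at `(u, v)` is the product of the variables `X i` over the coordinates `i`
in which `u` and `v` differ. -/
noncomputable def varchenkoMatrix {n : ℕ} (V : Finset (Fin n → Bool)) :
    Matrix {x // x ∈ V} {x // x ∈ V} (MvPolynomial (Fin n) ℤ) :=
  fun u v => ∏ i ∈ Finset.univ.filter (fun i => u.1 i ≠ v.1 i), MvPolynomial.X i

/-- The all-true vector (the antipode of the all-false vector). -/
def onesVec (n : ℕ) : Fin n → Bool := fun _ => true

/-- The all-false vector. -/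
def zerosVec (n : ℕ) : Fin n → Bool := fun _ => false

/-- The vector that is true exactly in coordinate `i`. -/
def unitVec {n : ℕ} (i : Fin n) : Fin n → Bool := fun j => j == i

/-! The Varchenko matrix `M` of the whole cube `{0,1}ⁿ` is the Kronecker product of the edge
matrices `[[1, Xᵢ], [Xᵢ, 1]]`, so `det M = Δ ^ 2 ^ (n - 1)` with `Δ = ∏ᵢ (1 - Xᵢ²)`. Summing
coordinatewise shows `M · N = Δ · 1`, where `N` is `M` with every `Xᵢ` replaced by `-Xᵢ`. By
Jacobi's complementary minor identity, the principal minor of `M` on `V` then satisfies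
`Δ ^ |Vᶜ| · det M[V] = det M · det N[Vᶜ]`. For `Q₄^{--}(1)` the complement is `{𝟘, e₁, 𝟙}`, and the
`3 × 3` determinant of `N` there is `(1 - X₁²)(1 - X₂²X₃²X₄²)`. -/

open Matrix Kronecker

section Cube

variable {R ι : Type*} [CommRing R] [Fintype ι]

noncomputable def cubeMatrix (x : ι → R) : Matrix (ι → Bool) (ι → Bool) R :=
  fun u v => ∏ i ∈ univ.filter (fun i => u i ≠ v i), x i

theorem cubeMatrix_apply (x : ι → R) (u v : ι → Bool) :
    cubeMatrix x u v = ∏ i, if u i = v i then 1 else x i := by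
  simp only [cubeMatrix, prod_filter, ite_not]

theorem cubeMatrix_mul_cubeMatrix_neg [DecidableEq ι] (x : ι → R) :
    cubeMatrix x * cubeMatrix (-x) =
      (∏ i, (1 - x i ^ 2)) • (1 : Matrix (ι → Bool) (ι → Bool) R) := by
  ext u v
  let f : ι → Bool → R := fun i b =>
    (if u i = b then 1 else x i) * (if b = v i then 1 else -x i)
  have sum_coord : ∀ i, ∑ b, f i b = if u i = v i then 1 - x i ^ 2 else 0 := by
    intro i
    simp only [f]
    cases u i <;> cases v i <;> simp <;> ring
  calc (cubeMatrix x * cubeMatrix (-x)) u v = ∑ w : ι → Bool, ∏ i, f i (w i) := by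
        simp only [mul_apply, cubeMatrix_apply, Pi.neg_apply, ← prod_mul_distrib, f]
    _ = ∏ i, ∑ b, f i b := (Fintype.prod_sum f).symm
    _ = _ := by
        simp only [sum_coord, Fintype.prod_ite_zero, ← _root_.funext_iff, Matrix.smul_apply, one_apply,
          smul_eq_mul, mul_ite, mul_one, mul_zero]

def edgeMatrix (a : R) : Matrix Bool Bool R :=
  of fun b c => if b = c then 1 else a

theorem det_edgeMatrix (a : R) : (edgeMatrix a).det = 1 - a ^ 2 := by
  rw [← det_submatrix_equiv_self finTwoEquiv, det_fin_two]
  simp [edgeMatrix, finTwoEquiv]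
  ring

theorem cubeMatrix_fin_succ {n : ℕ} (x : Fin (n + 1) → R) :
    cubeMatrix x = (edgeMatrix (x 0) ⊗ₖ cubeMatrix (Fin.tail x)).submatrix
      (Fin.consEquiv _).symm (Fin.consEquiv _).symm := by
  ext u v
  simp only [cubeMatrix_apply, Fin.prod_univ_succ, submatrix_apply, kroneckerMap_apply,
    edgeMatrix, of_apply, Fin.consEquiv, Equiv.coe_fn_symm_mk, Fin.tail, ite_mul, one_mul]
  congr

theorem det_cubeMatrix {n : ℕ} (x : Fin n → R) :
    (cubeMatrix x).det = (∏ i, (1 - x i ^ 2)) ^ 2 ^ (n - 1) := by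
  induction n with
  | zero => simp [det_unique, cubeMatrix_apply]
  | succ n ih =>
    rw [cubeMatrix_fin_succ, det_submatrix_equiv_self, det_kronecker, det_edgeMatrix, ih,
      Fin.prod_univ_succ, mul_pow]
    simp only [Fintype.card_pi, Fintype.card_bool, prod_const, card_univ, Fintype.card_fin,
      Nat.add_sub_cancel, ← pow_mul]
    congr 1
    cases n with
    | zero => simp
    | succ n => rw [Nat.add_sub_cancel, ← pow_succ]; rfl

end Cube

section Jacobi

variable {R : Type*} [CommRing R]

-- Jacobi's complementary minor identity for `N = c • P⁻¹`, stated without inverting `c`.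
theorem det_mul_det_toBlocks₂₂_of_mul_eq_smul_one {m n : Type*} [Fintype m] [Fintype n]
    [DecidableEq m] [DecidableEq n] {P N : Matrix (m ⊕ n) (m ⊕ n) R} {c : R}
    (h : P * N = c • 1) :
    P.det * N.toBlocks₂₂.det = c ^ Fintype.card n * P.toBlocks₁₁.det := by
  obtain ⟨A, B, C, D, rfl⟩ : ∃ A B C D, P = fromBlocks A B C D :=
    ⟨_, _, _, _, (fromBlocks_toBlocks P).symm⟩
  obtain ⟨E, F, G, H, rfl⟩ : ∃ E F G H, N = fromBlocks E F G H :=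
    ⟨_, _, _, _, (fromBlocks_toBlocks N).symm⟩
  rw [fromBlocks_multiply, ← fromBlocks_one, fromBlocks_smul, fromBlocks_inj] at h
  obtain ⟨-, h₁₂, -, h₂₂⟩ := h
  calc (fromBlocks A B C D).det * (fromBlocks E F G H).toBlocks₂₂.det
      = (fromBlocks A B C D * fromBlocks 1 F 0 H).det := by
        rw [det_mul, det_fromBlocks_zero₂₁, det_one, one_mul, toBlocks_fromBlocks₂₂]
    _ = (fromBlocks A 0 C (c • 1)).det := by
        rw [fromBlocks_multiply, h₁₂, h₂₂]
        simp only [smul_zero, Matrix.mul_one, Matrix.mul_zero, add_zero]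
    _ = c ^ Fintype.card n * (fromBlocks A B C D).toBlocks₁₁.det := by
        rw [det_fromBlocks_zero₁₂, det_smul, det_one, mul_one, toBlocks_fromBlocks₁₁, mul_comm]

theorem det_mul_det_submatrix_compl {ι : Type*} [Fintype ι] [DecidableEq ι] (p : ι → Prop)
    [DecidablePred p] {P N : Matrix ι ι R} {c : R} (h : P * N = c • 1) :
    P.det * (N.submatrix (Subtype.val : {i // ¬p i} → ι) Subtype.val).det =
      c ^ Fintype.card {i // ¬p i} *
        (P.submatrix (Subtype.val : {i // p i} → ι) Subtype.val).det := by
  have h' : P.submatrix (Equiv.sumCompl p) (Equiv.sumCompl p) *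
      N.submatrix (Equiv.sumCompl p) (Equiv.sumCompl p) = c • 1 := by
    rw [submatrix_mul_equiv, h, ← submatrix_one_equiv (Equiv.sumCompl p)]
    rfl
  have := det_mul_det_toBlocks₂₂_of_mul_eq_smul_one h'
  rwa [det_submatrix_equiv_self] at this

end Jacobi

theorem prod_one_sub_X_sq_ne_zero {σ R : Type*} [Fintype σ] [CommRing R] [Nontrivial R] :
    (∏ i : σ, (1 - X i ^ 2) : MvPolynomial σ R) ≠ 0 := by
  intro h
  simpa [map_prod] using congrArg constantCoeff h

theorem varchenkoMatrix_eq_submatrix_cubeMatrix {n : ℕ} (V : Finset (Fin n → Bool)) :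
    varchenkoMatrix V = (cubeMatrix X).submatrix Subtype.val Subtype.val :=
  rfl

theorem pow_card_compl_mul_det_varchenkoMatrix {n : ℕ} (V : Finset (Fin n → Bool)) :
    (∏ i, (1 - X i ^ 2)) ^ Fintype.card {v // v ∉ V} * (varchenkoMatrix V).det =
      (∏ i, (1 - X i ^ 2)) ^ 2 ^ (n - 1) *
        ((cubeMatrix (-X)).submatrix (Subtype.val : {v // v ∉ V} → _) Subtype.val).det := by
  rw [varchenkoMatrix_eq_submatrix_cubeMatrix, ← det_cubeMatrix X]
  convert (det_mul_det_submatrix_compl (· ∈ V) (cubeMatrix_mul_cubeMatrix_neg X)).symm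

def q4mm1Vertices : Finset (Fin 4 → Bool) :=
  (Finset.univ : Finset (Fin 4 → Bool)) \ {onesVec 4, zerosVec 4, unitVec (0 : Fin 4)}

noncomputable def q4mm1RemovedEquiv : Fin 3 ≃ {v // v ∉ q4mm1Vertices} :=
  Equiv.ofBijective
    ![⟨zerosVec 4, by decide⟩, ⟨unitVec 0, by decide⟩, ⟨onesVec 4, by decide⟩] (by decide)

theorem det_cubeMatrix_neg_submatrix_compl_q4mm1Vertices :
    ((cubeMatrix (-X : Fin 4 → MvPolynomial (Fin 4) ℤ)).submatrix
      (Subtype.val : {v // v ∉ q4mm1Vertices} → _) Subtype.val).det =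
      (1 - X 0 ^ 2) * (1 - X 1 ^ 2 * X 2 ^ 2 * X 3 ^ 2) := by
  rw [← det_submatrix_equiv_self q4mm1RemovedEquiv, det_fin_three]
  simp [q4mm1RemovedEquiv, cubeMatrix_apply, Fin.prod_univ_four, zerosVec, onesVec, unitVec]
  ring

/-- Varchenko determinant of the forbidden pc-minor Q₄^{--}(1); every factor has the well-structured form 1 − (∏_{i ∈ I} X_i)². -/
theorem varchenko_det_Q4_mm1 :
    (varchenkoMatrix
      ((Finset.univ : Finset (Fin 4 → Bool)) \ {onesVec 4, zerosVec 4, unitVec (0 : Fin 4)})).det =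
    (1 - X 0 ^ 2) ^ 6 * (1 - X 1 ^ 2) ^ 5 * (1 - X 2 ^ 2) ^ 5 * (1 - X 3 ^ 2) ^ 5 * (1 - X 1 ^ 2 * X 2 ^ 2 * X 3 ^ 2) := by
  have key := pow_card_compl_mul_det_varchenkoMatrix q4mm1Vertices
  rw [det_cubeMatrix_neg_submatrix_compl_q4mm1Vertices, ← Fintype.card_congr q4mm1RemovedEquiv,
    Fintype.card_fin] at key
  refine mul_left_cancel₀ (pow_ne_zero 3 prod_one_sub_X_sq_ne_zero) (key.trans ?_)
  have factored : ∀ a b c d e : MvPolynomial (Fin 4) ℤ, (a * b * c * d) ^ 8 * (a * e) =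
      (a * b * c * d) ^ 3 * (a ^ 6 * b ^ 5 * c ^ 5 * d ^ 5 * e) := by
    intros; ring
  simpa only [Fin.prod_univ_four, Nat.reduceSub, Nat.reducePow] using factored _ _ _ _ _
end

section
/- Let V = (Fin 5 → Bool) \ {𝟙, e₁}, the vertex set of the forbidden pc-minor Q₅^{-*}, and let M be the Varchenko matrix of V over ℤ[X₁, …, X₅]. Then det M = (1 − X₁²)¹⁴ (1 − X₂²)¹⁴ (1 − X₃²)¹⁴ (1 − X₄²)¹⁴ (1 − X₅²)¹⁴ · (1 − X₂²X₃²X₄²X₅²). -/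
/-!
The Varchenko matrix `A(x)` of the whole cube `Q_n` is the Kronecker product of the matrices
`[[1, xᵢ], [xᵢ, 1]]`, so `A(x) * A(-x) = δ • 1` with `δ = ∏ i, (1 - xᵢ²)`; since `A(-x)` is
conjugate to `A(x)` by a diagonal sign matrix, `det A(X) = ± δ ^ 2 ^ (n - 1)`, and the constant
coefficient fixes the sign. Jacobi's complementary minor identity applied to `A(X) * A(-X) = δ • 1`
expresses the Varchenko determinant of `Q_n` minus two vertices `a ≠ b` through the `2 × 2` minor
of `A(-X)` on `{a, b}`, which is `1 - (∏_{aᵢ ≠ bᵢ} Xᵢ)²`.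
-/

open Finset MvPolynomial

open Matrix

namespace Matrix

variable {ι R : Type*} [Fintype ι] [DecidableEq ι] [CommRing R]

theorem det_toSquareBlockProp_mul_pow_card_of_mul_eq_smul_one {A B : Matrix ι ι R} {δ : R}
    (hAB : A * B = δ • 1) (p : ι → Prop) [DecidablePred p] :
    (A.toSquareBlockProp p).det * δ ^ Fintype.card {i // ¬p i} =
      A.det * (B.toSquareBlockProp fun i => ¬p i).det := by
  -- Replacing the `p`-columns of `B` by those of `1` makes both `B'` and `A * B'` block triangular.
  set B' : Matrix ι ι R := of fun i j => if p j then (1 : Matrix ι ι R) i j else B i j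
  have hAB' : A * B' = of fun i j => if p j then A i j else δ * (1 : Matrix ι ι R) i j := by
    ext i j
    by_cases hj : p j
    · simp [B', hj, mul_apply, one_apply]
    · simpa [B', hj, mul_apply] using congrFun₂ hAB i j
  have hB'det : B'.det = (B.toSquareBlockProp fun i => ¬p i).det := by
    rw [twoBlockTriangular_det B' p fun i hi j hj => by
      simp [B', hj, one_apply_ne (ne_of_apply_ne p (by simp [hi, hj] : p i ≠ p j))]]
    have hone : B'.toSquareBlockProp p = 1 := by
      ext i j
      simp [toSquareBlockProp_def, B', j.2, one_apply, Subtype.ext_iff]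
    rw [hone, det_one, one_mul]
    congr 1
    ext i j
    simp [toSquareBlockProp_def, B', j.2]
  have hAB'det : (A * B').det = (A.toSquareBlockProp p).det * δ ^ Fintype.card {i // ¬p i} := by
    rw [twoBlockTriangular_det' _ p fun i hi j hj => by
      simp [hAB', hj, one_apply_ne (ne_of_apply_ne p (by simp [hi, hj] : p i ≠ p j))]]
    have hdiag : (A * B').toSquareBlockProp (fun i => ¬p i) = δ • 1 := by
      ext i j
      simp [toSquareBlockProp_def, hAB', j.2, one_apply, Subtype.ext_iff]
    rw [hdiag, det_smul, det_one, mul_one]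
    congr 2
    ext i j
    simp [toSquareBlockProp_def, hAB', j.2]
  rw [← hAB'det, det_mul, hB'det]

theorem det_eq_of_forall_eq_or_eq (M : Matrix ι ι R) {a b : ι} (hab : a ≠ b)
    (hι : ∀ k, k = a ∨ k = b) :
    M.det = M a a * M b b - M a b * M b a := by
  let e : Fin 2 ≃ ι := Equiv.ofBijective ![a, b] ⟨fun i j hij => by
    fin_cases i <;> fin_cases j <;> simp_all [eq_comm], fun k => by
    rcases hι k with rfl | rfl
    exacts [⟨0, rfl⟩, ⟨1, rfl⟩]⟩
  rw [← det_submatrix_equiv_self e M, det_fin_two]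
  rfl

end Matrix

section Hypercube

variable {ι R : Type*} [Fintype ι] [CommRing R]

noncomputable def hypercubeVarchenko (x : ι → R) : Matrix (ι → Bool) (ι → Bool) R :=
  of fun u v => ∏ i, if u i = v i then 1 else x i

theorem hypercubeVarchenko_map {S : Type*} [CommRing S] (f : R →+* S) (x : ι → R) :
    (hypercubeVarchenko x).map f = hypercubeVarchenko (f ∘ x) := by
  ext u v
  simp [hypercubeVarchenko, apply_ite f]

theorem hypercubeVarchenko_zero : hypercubeVarchenko (0 : ι → R) = 1 := by
  ext u v
  by_cases huv : u = v
  · simp [hypercubeVarchenko, huv, one_apply]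
  · obtain ⟨i, hi⟩ := Function.ne_iff.mp huv
    simpa [hypercubeVarchenko, huv] using prod_eq_zero (mem_univ i) (if_neg hi)

variable [DecidableEq ι]

def hypercubeSign : Matrix (ι → Bool) (ι → Bool) R :=
  diagonal fun u => ∏ i, if u i then -1 else 1

theorem hypercubeVarchenko_mul_neg (x : ι → R) :
    hypercubeVarchenko x * hypercubeVarchenko (-x) = (∏ i, (1 - x i ^ 2)) • 1 := by
  ext u w
  have hfactor (a c : Bool) (y : R) :
      ∑ s : Bool, (if a = s then 1 else y) * (if s = c then 1 else -y) =
        if a = c then 1 - y ^ 2 else 0 := by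
    cases a <;> cases c <;> simp <;> ring
  rw [mul_apply, Matrix.smul_apply, one_apply]
  simp only [hypercubeVarchenko, of_apply, ← prod_mul_distrib, Pi.neg_apply]
  rw [← Fintype.prod_sum fun i s => (if u i = s then 1 else x i) * (if s = w i then 1 else -x i)]
  simp only [hfactor]
  by_cases huw : u = w
  · simp [huw]
  · obtain ⟨i, hi⟩ := Function.ne_iff.mp huw
    simpa [huw] using prod_eq_zero (mem_univ i) (if_neg hi)

theorem hypercubeVarchenko_neg (x : ι → R) :
    hypercubeVarchenko (-x) =
      hypercubeSign * hypercubeVarchenko x * (hypercubeSign : Matrix _ _ R) := by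
  ext u v
  simp only [hypercubeSign, mul_diagonal, diagonal_mul, hypercubeVarchenko, of_apply,
    ← prod_mul_distrib]
  refine prod_congr rfl fun i _ => ?_
  cases u i <;> cases v i <;> simp

theorem hypercubeSign_mul_self :
    (hypercubeSign : Matrix (ι → Bool) (ι → Bool) R) * hypercubeSign = 1 := by
  rw [hypercubeSign, diagonal_mul_diagonal, ← diagonal_one]
  congr 1
  ext u
  rw [← prod_mul_distrib]
  exact prod_eq_one fun i _ => by cases u i <;> simp

theorem det_hypercubeVarchenko_neg (x : ι → R) :
    (hypercubeVarchenko (-x)).det = (hypercubeVarchenko x).det := by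
  have hsign : (hypercubeSign : Matrix (ι → Bool) (ι → Bool) R).det ^ 2 = 1 := by
    rw [sq, ← det_mul, hypercubeSign_mul_self, det_one]
  rw [hypercubeVarchenko_neg, det_mul, det_mul]
  linear_combination (hypercubeVarchenko x).det * hsign

theorem det_hypercubeVarchenko_X [Nonempty ι] :
    (hypercubeVarchenko (X : ι → MvPolynomial ι ℤ)).det =
      (∏ i, (1 - X i ^ 2)) ^ 2 ^ (Fintype.card ι - 1) := by
  set A := hypercubeVarchenko (X : ι → MvPolynomial ι ℤ)
  set m := 2 ^ (Fintype.card ι - 1)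
  have hcard : Fintype.card (ι → Bool) = m + m := by
    rw [Fintype.card_fun, Fintype.card_bool, ← two_mul, ← pow_succ',
      Nat.sub_add_cancel Fintype.card_pos]
  have hsq : A.det * A.det = (∏ i, (1 - X i ^ 2)) ^ m * (∏ i, (1 - X i ^ 2)) ^ m := by
    have h := congrArg det (hypercubeVarchenko_mul_neg (X : ι → MvPolynomial ι ℤ))
    rwa [det_mul, det_hypercubeVarchenko_neg, det_smul, det_one, mul_one, hcard, pow_add] at h
  have hconst : constantCoeff A.det = 1 := by
    have hX : (constantCoeff ∘ X : ι → ℤ) = 0 := by ext i; exact constantCoeff_X ℤ i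
    rw [RingHom.map_det, RingHom.mapMatrix_apply, hypercubeVarchenko_map, hX,
      hypercubeVarchenko_zero, det_one]
  rcases mul_self_eq_mul_self_iff.mp hsq with h | h
  · exact h
  · have h1 := congrArg constantCoeff h
    simp [hconst] at h1

theorem det_toSquareBlockProp_hypercubeVarchenko_neg_of_pair (x : ι → R)
    {p : (ι → Bool) → Prop} [DecidablePred p] {a b : ι → Bool} (hab : a ≠ b)
    (hp : ∀ u, p u ↔ u = a ∨ u = b) :
    ((hypercubeVarchenko (-x)).toSquareBlockProp p).det =
      1 - (∏ i ∈ univ.filter (fun i => a i ≠ b i), x i) ^ 2 := by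
  rw [det_eq_of_forall_eq_or_eq _ (a := ⟨a, (hp a).2 (.inl rfl)⟩)
    (b := ⟨b, (hp b).2 (.inr rfl)⟩) (by simpa [Subtype.ext_iff] using hab)
    fun k => by simpa [Subtype.ext_iff] using (hp k).1 k.2]
  have hsymm : ∀ i, (b i = a i) = (a i = b i) := fun i => propext eq_comm
  simp only [toSquareBlockProp_def, of_apply, hypercubeVarchenko, prod_filter, if_true,
    prod_const_one, hsymm, ← sq, ← prod_pow, one_pow]
  congr 1
  refine prod_congr rfl fun i _ => ?_
  split_ifs <;> simp_all

end Hypercube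

theorem varchenkoMatrix_eq_toSquareBlockProp {n : ℕ} (V : Finset (Fin n → Bool)) :
    varchenkoMatrix V = (hypercubeVarchenko X).toSquareBlockProp (· ∈ V) := by
  ext u v
  simp [varchenkoMatrix, hypercubeVarchenko, toSquareBlockProp_def, prod_filter, ite_not]

theorem det_varchenkoMatrix_mul_pow_card_compl {n : ℕ} [NeZero n] (V : Finset (Fin n → Bool)) :
    (varchenkoMatrix V).det * (∏ i, (1 - X i ^ 2)) ^ Fintype.card {u // u ∉ V} =
      (∏ i, (1 - X i ^ 2)) ^ 2 ^ (n - 1) *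
        ((hypercubeVarchenko (-X)).toSquareBlockProp (· ∉ V)).det := by
  have hdet := det_hypercubeVarchenko_X (ι := Fin n)
  rw [Fintype.card_fin] at hdet
  rw [varchenkoMatrix_eq_toSquareBlockProp, ← hdet]
  convert det_toSquareBlockProp_mul_pow_card_of_mul_eq_smul_one
    (hypercubeVarchenko_mul_neg (X : Fin n → MvPolynomial (Fin n) ℤ)) (· ∈ V) using 3

theorem det_varchenkoMatrix_univ_sdiff_pair {n : ℕ} (hn : 2 ≤ n) {a b : Fin n → Bool}
    (hab : a ≠ b) :
    (varchenkoMatrix (univ \ {a, b})).det =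
      (∏ i, (1 - X i ^ 2)) ^ (2 ^ (n - 1) - 2) *
        (1 - (∏ i ∈ univ.filter (fun i => a i ≠ b i), X i) ^ 2) := by
  have : NeZero n := ⟨by omega⟩
  have hS : ∀ u, u ∉ univ \ {a, b} ↔ u = a ∨ u = b := by simp; tauto
  have hcard : Fintype.card {u // u ∉ univ \ {a, b}} = 2 := by
    rw [Fintype.card_subtype, filter_congr fun u _ => hS u, ← card_pair hab]
    congr 1
    ext u
    simp
  have hminor := det_toSquareBlockProp_hypercubeVarchenko_neg_of_pair
    (X : Fin n → MvPolynomial (Fin n) ℤ) hab hS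
  have hδ : (∏ i, (1 - X i ^ 2) : MvPolynomial (Fin n) ℤ) ≠ 0 := fun h => by
    simpa using congrArg constantCoeff h
  have hpow : 2 ^ (n - 1) = 2 ^ (n - 1) - 2 + 2 := by
    have : 2 ^ 1 ≤ 2 ^ (n - 1) := Nat.pow_le_pow_right two_pos (by omega)
    omega
  have key := det_varchenkoMatrix_mul_pow_card_compl (univ \ {a, b})
  rw [hcard, hminor, hpow, pow_add, mul_right_comm] at key
  exact mul_right_cancel₀ (pow_ne_zero 2 hδ) key

/-- Varchenko determinant of the forbidden pc-minor Q₅^{-*}. -/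
theorem varchenko_det_Q5_minus_star :
    (varchenkoMatrix
      ((Finset.univ : Finset (Fin 5 → Bool)) \ {onesVec 5, unitVec (0 : Fin 5)})).det =
    (1 - X 0 ^ 2) ^ 14 * (1 - X 1 ^ 2) ^ 14 * (1 - X 2 ^ 2) ^ 14 * (1 - X 3 ^ 2) ^ 14 * (1 - X 4 ^ 2) ^ 14 * (1 - X 1 ^ 2 * X 2 ^ 2 * X 3 ^ 2 * X 4 ^ 2) := by
  rw [det_varchenkoMatrix_univ_sdiff_pair (by norm_num) (by decide)]
  simp [prod_filter, Fin.prod_univ_five, onesVec, unitVec, mul_pow]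
end
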